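/- Let (E,w) be a finite weighted graph with at least one vertex such that no cycle in (E,w) has an exit and the weighted part of (E,w) is well-behaved. Let c and d be cycles in Ê based at vertices u and v respectively. Then: (i) if u=v then c=d; and (ii) there is no nod-path p all of whose letters are real or ghost edges not appearing in any quasicycle such that p has source u and range v in Ê_d. -/

import Mathlib

/-!
Definitions for weighted graphs and weighted Leavitt path algebras,
following Hazrat–Preusser.  All weighted graphs are assumed row-finite
with at least one vertex (this is built into the structure).
-/

/-- A (row-finite, nonempty) weighted graph `(E,w)`. -/
structure WeightedGraph : Type 1 where
  V : Type
  E : Type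
  s : E → V
  r : E → V
  w : E → ℕ
  w_pos : ∀ e, 1 ≤ w e
  rowFinite : ∀ v : V, {e : E | s e = v}.Finite
  vNonempty : Nonempty V

namespace WeightedGraph

section GraphDefs

variable (G : WeightedGraph)

/-- `(E,w)` is a finite weighted graph. -/
def IsFinite : Prop := Finite G.V ∧ Finite G.E

/-- `(E,w)` is unweighted iff all edges have weight 1. -/
def IsUnweighted : Prop := ∀ e : G.E, G.w e = 1

/-- a sink is a vertex emitting no edges. -/
def IsSink (v : G.V) : Prop := ∀ e : G.E, G.s e ≠ v

/-- `w(v) = max { w(e) ∣ e ∈ s⁻¹(v) }` (with `max ∅ = 0`). -/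
noncomputable def vw (v : G.V) : ℕ := sSup (G.w '' {e : G.E | G.s e = v})

/-- Edges of the associated directed graph `Ê`: pairs `(e,i)` with `1 ≤ i ≤ w(e)`,
representing the edge `e_i`. -/
abbrev HatE : Type := {p : G.E × ℕ // 1 ≤ p.2 ∧ p.2 ≤ G.w p.1}

def hatS (x : G.HatE) : G.V := G.s x.1.1

def hatR (x : G.HatE) : G.V := G.r x.1.1

/-- Letters of the double graph `Ê_d`: `Sum.inl` is a real edge `e_i`,
`Sum.inr` is a ghost edge `e_i^*`. -/
abbrev DL : Type := G.HatE ⊕ G.HatE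

/-- source of a letter of `Ê_d`. -/
def dS : G.DL → G.V
  | Sum.inl x => G.hatS x
  | Sum.inr x => G.hatR x

/-- range of a letter of `Ê_d`. -/
def dR : G.DL → G.V
  | Sum.inl x => G.hatR x
  | Sum.inr x => G.hatS x

def dFlip : G.DL → G.DL
  | Sum.inl x => Sum.inr x
  | Sum.inr x => Sum.inl x

/-- the star `p ↦ p^*` of a d-word. -/
def dStar (l : List G.DL) : List G.DL := (l.map G.dFlip).reverse

/-- standard degree of a letter: `deg e_i = ε_i`, `deg e_i^* = -ε_i`
(as finitely supported functions `ℕ →₀ ℤ`). -/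
noncomputable def dDeg : G.DL → (ℕ →₀ ℤ)
  | Sum.inl x => Finsupp.single x.1.2 1
  | Sum.inr x => -(Finsupp.single x.1.2 1)

/-- homogeneous degree of a d-word. -/
noncomputable def dWordDeg (l : List G.DL) : ℕ →₀ ℤ := (l.map G.dDeg).sum

/-- `u ≥ v`: there is a path in `E` from `u` to `v`. -/
def Reaches : G.V → G.V → Prop :=
  Relation.ReflTransGen (fun u v => ∃ e : G.E, G.s e = u ∧ G.r e = v)

/-- a nontrivial path in `E`, given by its (nonempty) list of edges. -/
def IsPath (l : List G.E) : Prop :=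
  l ≠ [] ∧ l.Chain' (fun a b => G.r a = G.s b)

/-- source of a nontrivial path. -/
def pSrc? (l : List G.E) : Option G.V := l.head?.map G.s

/-- range of a nontrivial path. -/
def pRng? (l : List G.E) : Option G.V := l.getLast?.map G.r

/-- a cycle in `E`: a closed nontrivial path with pairwise distinct sources. -/
def IsCycle (l : List G.E) : Prop :=
  G.IsPath l ∧ G.pRng? l = G.pSrc? l ∧ (l.map G.s).Nodup

def Acyclic : Prop := ∀ l : List G.E, ¬ G.IsCycle l

/-- the cycle `l` has an exit. -/
def CycleHasExit (l : List G.E) : Prop :=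
  ∃ x ∈ l, ∃ e : G.E, G.s e = G.s x ∧ e ≠ x

def NoCycleHasExit : Prop := ∀ l : List G.E, G.IsCycle l → ¬ G.CycleHasExit l

/-- `v ∈ T(r(E¹_w))`: some weighted edge's range reaches `v`. -/
def InTRw (v : G.V) : Prop := ∃ g : G.E, 1 < G.w g ∧ G.Reaches (G.r g) v

/-- two edges are in line. -/
def InLine (e f : G.E) : Prop :=
  e = f ∨ G.Reaches (G.r e) (G.s f) ∨ G.Reaches (G.r f) (G.s e)

/-- Condition (i): no vertex emits two distinct weighted edges. -/
def Cond1 : Prop := ∀ e f : G.E, 1 < G.w e → 1 < G.w f → G.s e = G.s f → e = f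

/-- Condition (ii): no vertex of `T(r(E¹_w))` emits two distinct edges. -/
def Cond2 : Prop :=
  ∀ v : G.V, G.InTRw v → ∀ e f : G.E, G.s e = v → G.s f = v → e = f

/-- Condition (iii): weighted edges not in line have disjoint trees of their ranges. -/
def Cond3 : Prop :=
  ∀ e f : G.E, 1 < G.w e → 1 < G.w f → ¬ G.InLine e f →
    ∀ v : G.V, G.Reaches (G.r e) v → ¬ G.Reaches (G.r f) v

/-- Condition (iv): no cycle is based at a vertex of `T(r(E¹_w))`. -/
def Cond4 : Prop :=
  ∀ l : List G.E, G.IsCycle l → ∀ v : G.V, G.pSrc? l = some v → ¬ G.InTRw v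

/-- Condition (v): there is no "weighted/unweighted zig-zag cycle" of paths
`p₁,…,p_n,q₁,…,q_n` (indices cyclic, 0-based). -/
def Cond5 : Prop :=
  ¬ ∃ (n : ℕ) (hn : 0 < n) (p q : Fin n → List G.E),
      (∀ i, G.IsPath (p i)) ∧ (∀ i, G.IsPath (q i)) ∧
      (∀ i, G.pRng? (p i) = G.pRng? (q i)) ∧
      (∀ i : Fin n, G.pSrc? (p ⟨(i.1 + 1) % n, Nat.mod_lt _ hn⟩) = G.pSrc? (q i)) ∧
      (∀ i, ∃ a, (p i).head? = some a ∧ 1 < G.w a) ∧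
      (∀ i, ∃ a, (q i).head? = some a ∧ G.w a = 1) ∧
      (∀ i, ∃ a b, (p i).getLast? = some a ∧ (q i).getLast? = some b ∧ a ≠ b)

/-- the weighted part of `(E,w)` is weakly well-behaved. -/
def WeaklyWellBehaved : Prop := G.Cond1 ∧ G.Cond2 ∧ G.Cond3 ∧ G.Cond4

/-- the weighted part of `(E,w)` is well-behaved. -/
def WellBehaved : Prop := G.WeaklyWellBehaved ∧ G.Cond5

/-- a weighted edge is of type A if it is the only edge emitted by its source. -/
def TypeA (e : G.E) : Prop := ∀ f : G.E, G.s f = G.s e → f = e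

/-- `sp` is a choice of special edges: for every non-sink `v`, `sp v ∈ s⁻¹(v)`
and `w (sp v) = w(v)`. -/
def HasSpecial (sp : G.V → G.E) : Prop :=
  ∀ v : G.V, (∃ e : G.E, G.s e = v) → G.s (sp v) = v ∧ G.w (sp v) = G.vw v

/-- forbidden two-letter words, relative to a choice `sp` of special edges:
`e^v_i (e^v_j)^*` and `e_1^* f_1` (for `e,f` with the same source). -/
def Forbidden (sp : G.V → G.E) : G.DL → G.DL → Prop
  | Sum.inl a, Sum.inr b => a.1.1 = b.1.1 ∧ a.1.1 = sp (G.s a.1.1)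
  | Sum.inr a, Sum.inl b => a.1.2 = 1 ∧ b.1.2 = 1 ∧ G.s a.1.1 = G.s b.1.1
  | _, _ => False

/-- a d-word is a path in the double graph `Ê_d`. -/
def IsDWord (l : List G.DL) : Prop := l.Chain' (fun x y => G.dR x = G.dS y)

/-- source of a nontrivial d-path. -/
def dSrc? (l : List G.DL) : Option G.V := l.head?.map G.dS

/-- range of a nontrivial d-path. -/
def dRng? (l : List G.DL) : Option G.V := l.getLast?.map G.dR

/-- a nod-path: a d-path none of whose subwords is forbidden. -/
def IsNod (sp : G.V → G.E) (l : List G.DL) : Prop :=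
  G.IsDWord l ∧ l.Chain' (fun x y => ¬ G.Forbidden sp x y)

/-- a (nontrivial) nod²-path: a nod-path `p` such that `p²` is a nod-path. -/
def IsNod2 (sp : G.V → G.E) (l : List G.DL) : Prop :=
  l ≠ [] ∧ G.IsNod sp (l ++ l)

/-- a quasicycle: a nod²-path `p` such that no subword of `p²` of length `< |p|`
is a nod²-path. -/
def IsQuasicycle (sp : G.V → G.E) (l : List G.DL) : Prop :=
  G.IsNod2 sp l ∧
    ∀ m : List G.DL, m <:+: (l ++ l) → m.length < l.length → ¬ G.IsNod2 sp m

/-- a lenod-path: a nod-path `p` such that `o ++ p` is a nod-path for every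
nontrivial nod-path `o` with `r(o) = s(p)`. -/
def IsLenod (sp : G.V → G.E) (l : List G.DL) : Prop :=
  G.IsNod sp l ∧ ∀ o : List G.DL, o ≠ [] → G.IsNod sp o →
    G.dRng? o = G.dSrc? l → G.IsNod sp (o ++ l)

/-- a nontrivial path in `Ê`, as a nonempty list of edges of `Ê`. -/
def IsHatPath (l : List G.HatE) : Prop :=
  l ≠ [] ∧ l.Chain' (fun a b => G.hatR a = G.hatS b)

/-- `max { w(f) ∣ f ∈ s⁻¹(s(e)), f ≠ e }` (with `max ∅ = 0`). -/
noncomputable def maxOther (e : G.E) : ℕ :=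
  sSup (G.w '' {f : G.E | G.s f = G.s e ∧ f ≠ e})

/-- a super-special path in `Ê`. -/
def IsSuperSpecial (l : List G.HatE) : Prop :=
  G.IsHatPath l ∧ ∀ x ∈ l, G.maxOther x.1.1 < x.1.2

/-- an unweighted path in `Ê`. -/
def IsUnweightedPath (l : List G.HatE) : Prop :=
  G.IsHatPath l ∧ ∀ x ∈ l, G.w x.1.1 = 1

def hatSrc? (l : List G.HatE) : Option G.V := l.head?.map G.hatS

def hatRng? (l : List G.HatE) : Option G.V := l.getLast?.map G.hatR

/-- a closed nontrivial path in `Ê`. -/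
def IsHatClosed (l : List G.HatE) : Prop :=
  G.IsHatPath l ∧ G.hatRng? l = G.hatSrc? l

/-- a cycle in `Ê`. -/
def IsHatCycle (l : List G.HatE) : Prop :=
  G.IsHatPath l ∧ G.hatRng? l = G.hatSrc? l ∧ (l.map G.hatS).Nodup

/-- embedding of paths of `Ê` as d-words consisting of real edges. -/
def embR (l : List G.HatE) : List G.DL := l.map Sum.inl

end GraphDefs

section AlgebraDefs

variable (G : WeightedGraph) (K : Type) [Field K]

/-- generator of the free algebra corresponding to a vertex. -/
noncomputable def gV (v : G.V) : FreeAlgebra K (G.V ⊕ G.DL) :=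
  FreeAlgebra.ι K (Sum.inl v)

/-- generator of the free algebra corresponding to a (real or ghost) edge of `Ê_d`. -/
noncomputable def gD (x : G.DL) : FreeAlgebra K (G.V ⊕ G.DL) :=
  FreeAlgebra.ι K (Sum.inr x)

/-- `e_i`, interpreted as `0` if `i > w(e)` or `i = 0`. -/
noncomputable def gReal (e : G.E) (i : ℕ) : FreeAlgebra K (G.V ⊕ G.DL) :=
  if h : 1 ≤ i ∧ i ≤ G.w e then G.gD K (Sum.inl ⟨(e, i), h⟩) else 0

/-- `e_i^*`, interpreted as `0` if `i > w(e)` or `i = 0`. -/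
noncomputable def gGhost (e : G.E) (i : ℕ) : FreeAlgebra K (G.V ⊕ G.DL) :=
  if h : 1 ≤ i ∧ i ≤ G.w e then G.gD K (Sum.inr ⟨(e, i), h⟩) else 0

end AlgebraDefs

/-- The defining relations of the weighted Leavitt path algebra `L_K(E,w)`:
the path algebra relations, the two families of Leavitt relations, and
(for a graph with finitely many vertices) `∑ v = 1`. -/
inductive LRel (G : WeightedGraph) (K : Type) [Field K] :
    FreeAlgebra K (G.V ⊕ G.DL) → FreeAlgebra K (G.V ⊕ G.DL) → Prop
  | vertex_eq (v : G.V) : LRel G K (G.gV K v * G.gV K v) (G.gV K v)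
  | vertex_ne (v v' : G.V) (h : v ≠ v') : LRel G K (G.gV K v * G.gV K v') 0
  | src (x : G.DL) : LRel G K (G.gV K (G.dS x) * G.gD K x) (G.gD K x)
  | rng (x : G.DL) : LRel G K (G.gD K x * G.gV K (G.dR x)) (G.gD K x)
  | inner_eq (v : G.V) (i : ℕ) (h1 : 1 ≤ i) (h2 : i ≤ G.vw v) :
      LRel G K (∑ᶠ e ∈ {e : G.E | G.s e = v}, G.gReal K e i * G.gGhost K e i)
        (G.gV K v)
  | inner_ne (v : G.V) (i j : ℕ) (h1 : 1 ≤ i) (h2 : i ≤ G.vw v)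
      (h3 : 1 ≤ j) (h4 : j ≤ G.vw v) (hij : i ≠ j) :
      LRel G K (∑ᶠ e ∈ {e : G.E | G.s e = v}, G.gReal K e i * G.gGhost K e j) 0
  | outer_eq (e : G.E) :
      LRel G K (∑ i ∈ Finset.Icc 1 (G.vw (G.s e)), G.gGhost K e i * G.gReal K e i)
        (G.gV K (G.r e))
  | outer_ne (e f : G.E) (h : G.s e = G.s f) (hef : e ≠ f) :
      LRel G K (∑ i ∈ Finset.Icc 1 (G.vw (G.s e)), G.gGhost K e i * G.gReal K f i) 0
  | unit (h : Finite G.V) : LRel G K (∑ᶠ v : G.V, G.gV K v) 1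

/-- The weighted Leavitt path algebra `L_K(E,w)`. -/
abbrev LWPA (G : WeightedGraph) (K : Type) [Field K] : Type :=
  RingQuot (LRel G K)

/-- image of a vertex in `L_K(E,w)`. -/
noncomputable def vx (G : WeightedGraph) (K : Type) [Field K] (v : G.V) : LWPA G K :=
  RingQuot.mkAlgHom K (LRel G K) (G.gV K v)

/-- image of a letter of `Ê_d` in `L_K(E,w)`. -/
noncomputable def dlx (G : WeightedGraph) (K : Type) [Field K] (x : G.DL) : LWPA G K :=
  RingQuot.mkAlgHom K (LRel G K) (G.gD K x)

/-- image of a d-word in `L_K(E,w)` (product of its letters). -/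
noncomputable def wordProd (G : WeightedGraph) (K : Type) [Field K]
    (l : List G.DL) : LWPA G K :=
  (l.map (G.dlx K)).prod

/-- image in `L_K(E,w)` of an arbitrary word in vertices and edges of `Ê_d`. -/
noncomputable def genProd (G : WeightedGraph) (K : Type) [Field K]
    (l : List (G.V ⊕ G.DL)) : LWPA G K :=
  (l.map (fun t => RingQuot.mkAlgHom K (LRel G K) (FreeAlgebra.ι K t))).prod

/-- degree of a generator (vertices have degree `0`). -/
noncomputable def genDeg (G : WeightedGraph) : G.V ⊕ G.DL → (ℕ →₀ ℤ)
  | Sum.inl _ => 0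
  | Sum.inr x => G.dDeg x

/-- degree of a word in the generators. -/
noncomputable def genWordDeg (G : WeightedGraph) (l : List (G.V ⊕ G.DL)) : ℕ →₀ ℤ :=
  (l.map G.genDeg).sum

/-- the homogeneous component of degree `g` of `L_K(E,w)` with respect to the
standard grading: the span of the images of all words of degree `g`. -/
noncomputable def component (G : WeightedGraph) (K : Type) [Field K] (g : ℕ →₀ ℤ) :
    Submodule K (LWPA G K) :=
  Submodule.span K
    {a : LWPA G K | ∃ l : List (G.V ⊕ G.DL), G.genWordDeg l = g ∧ a = G.genProd K l}

/-- `L_K(E,w)` is locally finite with respect to its standard grading. -/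
def LocallyFinite (G : WeightedGraph) (K : Type) [Field K] : Prop :=
  ∀ g : ℕ →₀ ℤ, FiniteDimensional K ↥(G.component K g)

end WeightedGraph

/-- The Gelfand–Kirillov dimension of a `K`-algebra `A`: the supremum over all
finite-dimensional subspaces `W ≤ A` of
`limsup_n log(dim_K (K + W + W² + ⋯ + Wⁿ)) / log n`. -/
noncomputable def gkDim (K : Type) [Field K] (A : Type) [Ring A] [Algebra K A] : EReal :=
  ⨆ (W : Submodule K A) (_ : FiniteDimensional K ↥W),
    Filter.limsup
      (fun n : ℕ =>
        ((Real.log (Module.finrank K ↥(∑ i ∈ Finset.range (n + 1), W ^ i) : ℝ) /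
            Real.log (n : ℝ) : ℝ) : EReal))
      Filter.atTop

namespace WeightedGraph

variable {G : WeightedGraph}

/-- Walks in `E` with endpoints, by recursion. -/
def Wk (G : WeightedGraph) : G.V → List G.E → G.V → Prop
  | x, [], y => x = y
  | x, e :: t, y => G.s e = x ∧ G.Wk (G.r e) t y

lemma wk_append {a b : List G.E} {x y : G.V} :
    G.Wk x (a ++ b) y ↔ ∃ m, G.Wk x a m ∧ G.Wk m b y := by
  induction a generalizing x with
  | nil => simp [Wk]
  | cons e t ih =>
      constructor
      · rintro ⟨hs, h⟩
        obtain ⟨m, h1, h2⟩ := ih.1 h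
        exact ⟨m, ⟨hs, h1⟩, h2⟩
      · rintro ⟨m, ⟨hs, h1⟩, h2⟩
        exact ⟨hs, ih.2 ⟨m, h1, h2⟩⟩

lemma Wk.reaches {l : List G.E} {x y : G.V} (h : G.Wk x l y) : G.Reaches x y := by
  induction l generalizing x with
  | nil => cases h; exact Relation.ReflTransGen.refl
  | cons e t ih =>
      obtain ⟨hs, h⟩ := h
      exact Relation.ReflTransGen.head ⟨e, hs, rfl⟩ (ih h)

lemma reaches_iff_wk {x y : G.V} : G.Reaches x y ↔ ∃ l, G.Wk x l y := by
  constructor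
  · intro h
    induction h with
    | refl => exact ⟨[], rfl⟩
    | tail _ h2 ih =>
        obtain ⟨l, hl⟩ := ih
        obtain ⟨e, he, hr⟩ := h2
        exact ⟨l ++ [e], wk_append.2 ⟨_, hl, he, hr⟩⟩
  · rintro ⟨l, hl⟩; exact hl.reaches

lemma Wk.mem_reaches {l : List G.E} {x y : G.V} (h : G.Wk x l y) {e : G.E} (he : e ∈ l) :
    G.Reaches (G.r e) y := by
  obtain ⟨s', t', rfl⟩ := List.append_of_mem he
  obtain ⟨m, _, _, h2⟩ := wk_append.1 h
  exact h2.reaches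

lemma Wk.chain' {l : List G.E} {x y : G.V} (h : G.Wk x l y) :
    l.Chain' (fun a b => G.r a = G.s b) := by
  induction l generalizing x with
  | nil => exact List.isChain_nil
  | cons e t ih =>
      obtain ⟨hs, h⟩ := h
      refine List.isChain_cons.2 ⟨?_, ih h⟩
      intro z hz
      cases t with
      | nil => simp at hz
      | cons f t' =>
          obtain ⟨hf, _⟩ := h
          simp only [List.head?_cons, Option.mem_def, Option.some.injEq] at hz
          subst hz; exact hf.symm

end WeightedGraph

namespace WeightedGraph

variable {G : WeightedGraph}

lemma wk_rng {l : List G.E} {x y : G.V} (h : G.Wk x l y) (hne : l ≠ []) :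
    G.r (l.getLast hne) = y := by
  induction l generalizing x with
  | nil => exact absurd rfl hne
  | cons e t ih =>
      obtain ⟨hs, h⟩ := h
      cases t with
      | nil => exact h.symm ▸ rfl
      | cons f t' => rw [List.getLast_cons (List.cons_ne_nil f t')]; exact ih h _

lemma inTRw_mono {x y : G.V} (hx : G.InTRw x) (hxy : G.Reaches x y) : G.InTRw y := by
  obtain ⟨g, hg, hr⟩ := hx
  exact ⟨g, hg, hr.trans hxy⟩

lemma reaches_single {e : G.E} {x : G.V} (he : G.s e = x) : G.Reaches x (G.r e) :=
  Relation.ReflTransGen.single ⟨e, he, rfl⟩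

lemma isCycle_of_wk {l : List G.E} {x : G.V} (h : G.Wk x l x) (hne : l ≠ [])
    (hnd : (l.map G.s).Nodup) : G.IsCycle l ∧ G.pSrc? l = some x := by
  have hsrc : G.pSrc? l = some x := by
    cases l with
    | nil => exact absurd rfl hne
    | cons e t => simp [pSrc?, h.1]
  refine ⟨⟨⟨hne, h.chain'⟩, ?_, hnd⟩, hsrc⟩
  rw [hsrc]
  simp [pRng?, List.getLast?_eq_getLast hne, wk_rng h hne]

lemma no_closed_aux (hC4 : G.Cond4) :
    ∀ (n : ℕ) (l : List G.E) (x : G.V), l.length ≤ n → G.InTRw x → G.Wk x l x →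
      l ≠ [] → False := by
  intro n
  induction n with
  | zero =>
      intro l x hlen _ _ hne
      rw [Nat.le_zero, List.length_eq_zero_iff] at hlen
      exact hne hlen
  | succ n ih =>
      intro l x hlen hx h hne
      by_cases hnd : (l.map G.s).Nodup
      · obtain ⟨hcyc, hsrc⟩ := isCycle_of_wk h hne hnd
        exact hC4 l hcyc x hsrc hx
      · rw [List.nodup_iff_injective_get] at hnd
        simp only [Function.Injective, not_forall] at hnd
        obtain ⟨i, j, hij, hne'⟩ := hnd
        wlog hlt : (i : ℕ) < (j : ℕ) generalizing i j
        · exact this j i hij.symm (Ne.symm hne') (by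
            rcases Nat.lt_or_ge (j : ℕ) (i : ℕ) with h' | h'
            · exact h'
            · exact absurd (Fin.ext (Nat.le_antisymm h' (Nat.le_of_not_lt hlt))) hne')
        have hjl : (j : ℕ) < l.length := by
          have := j.isLt; simpa using this
        have hil : (i : ℕ) < l.length := lt_trans hlt hjl
        have hget : G.s l[(i : ℕ)] = G.s l[(j : ℕ)] := by
          have := hij
          simp only [List.get_eq_getElem, List.getElem_map] at this
          exact this
        -- split at i
        obtain ⟨m, h1, h2⟩ := wk_append.1 (by rw [List.take_append_drop (i : ℕ)]; exact h)
        rw [List.drop_eq_getElem_cons hil] at h2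
        have hm : m = G.s l[(i : ℕ)] := h2.1.symm
        obtain ⟨m', h1', h2'⟩ := wk_append.1 (by rw [List.take_append_drop (j : ℕ)]; exact h)
        rw [List.drop_eq_getElem_cons hjl] at h2'
        have hm' : m' = G.s l[(j : ℕ)] := h2'.1.symm
        have hwk : G.Wk x (l.take (i : ℕ) ++ l.drop (j : ℕ)) x := by
          refine wk_append.2 ⟨m, h1, ?_⟩
          rw [List.drop_eq_getElem_cons hjl]
          exact ⟨by rw [hm, hget], (h2'.2 : _)⟩
        refine ih (l.take (i : ℕ) ++ l.drop (j : ℕ)) x ?_ hx hwk ?_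
        · rw [List.length_append, List.length_take, List.length_drop]
          omega
        · simp only [ne_eq, List.append_eq_nil_iff, not_and]
          intro _
          rw [List.drop_eq_getElem_cons hjl]
          exact List.cons_ne_nil _ _

lemma no_closed (hC4 : G.Cond4) {l : List G.E} {x : G.V} (hx : G.InTRw x)
    (h : G.Wk x l x) (hne : l ≠ []) : False :=
  no_closed_aux hC4 l.length l x le_rfl hx h hne

lemma wk_unique (hC2 : G.Cond2) (hC4 : G.Cond4) :
    ∀ (α : List G.E) {β : List G.E} {x y : G.V}, G.InTRw x → G.Wk x α y → G.Wk x β y →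
      α = β := by
  intro α
  induction α with
  | nil =>
      intro β x y hx ha hb
      cases ha
      cases β with
      | nil => rfl
      | cons f t => exact absurd hb (fun hb => no_closed hC4 hx hb (List.cons_ne_nil f t))
  | cons e t ih =>
      intro β x y hx ha hb
      cases β with
      | nil =>
          cases hb
          exact absurd ha (fun ha => no_closed hC4 hx ha (List.cons_ne_nil e t))
      | cons f t' =>
          obtain ⟨he, ha'⟩ := ha
          obtain ⟨hf, hb'⟩ := hb
          have hef : e = f := hC2 x hx e f he hf
          subst hef
          have : t = t' := ih (inTRw_mono hx (reaches_single he)) ha' hb'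
          rw [this]

end WeightedGraph

namespace WeightedGraph

variable {G : WeightedGraph}

lemma wk_of_chain' : ∀ {l : List G.E} (hne : l ≠ []),
    l.Chain' (fun a b => G.r a = G.s b) →
    G.Wk (G.s (l.head hne)) l (G.r (l.getLast hne)) := by
  intro l
  induction l with
  | nil => intro hne; exact absurd rfl hne
  | cons e t ih =>
      intro _ hch
      cases t with
      | nil => exact ⟨rfl, rfl⟩
      | cons f t' =>
          obtain ⟨hef, h'⟩ := List.isChain_cons_cons.1 hch
          refine ⟨rfl, ?_⟩
          rw [List.getLast_cons (List.cons_ne_nil f t')]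
          have := ih (List.cons_ne_nil f t') h'
          rwa [show G.s ((f :: t').head (List.cons_ne_nil f t')) = G.r e from hef.symm] at this

/-- projection of a hat-path element to `E`. -/
@[simp] def heE (x : G.HatE) : G.E := x.1.1

lemma hat_to_E {c : List G.HatE} {u : G.V} (hc : G.IsHatCycle c) (hcu : G.hatSrc? c = some u) :
    G.IsCycle (c.map heE) ∧ G.pSrc? (c.map heE) = some u ∧ G.Wk u (c.map heE) u := by
  obtain ⟨⟨hne, hch⟩, hclosed, hnd⟩ := hc
  have hγne : c.map heE ≠ [] := by simpa using hne
  have hchE : (c.map heE).Chain' (fun a b => G.r a = G.s b) :=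
    (List.isChain_map heE).mpr hch
  have hheadS : G.s ((c.map heE).head hγne) = u := by
    rw [List.head_map]
    cases c with
    | nil => exact absurd rfl hne
    | cons x t => simpa [hatSrc?, hatS] using hcu
  have hlast : G.r ((c.map heE).getLast hγne) = u := by
    rw [List.getLast_map]
    have h1 : G.hatRng? c = some u := by rw [hclosed, hcu]
    rw [hatRng?, List.getLast?_eq_getLast hne] at h1
    simpa [hatR] using h1
  have hwk : G.Wk u (c.map heE) u := by
    have := wk_of_chain' hγne hchE
    rwa [hheadS, hlast] at this
  have hsrc : G.pSrc? (c.map heE) = some u := by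
    rw [pSrc?]
    cases c with
    | nil => exact absurd rfl hne
    | cons x t =>
        simp only [List.map_cons, List.head?_cons, Option.map_some]
        simpa [hatSrc?, hatS] using hcu
  have hndE : ((c.map heE).map G.s).Nodup := by
    rw [List.map_map]; exact hnd
  refine ⟨⟨⟨hγne, hchE⟩, ?_, hndE⟩, hsrc, hwk⟩
  rw [hsrc, pRng?, List.getLast?_eq_getLast hγne]
  have h2 := hlast
  rw [List.getLast_map] at h2
  simpa using h2

lemma hatCycle_not_inTRw (hC4 : G.Cond4) {c : List G.HatE} {u : G.V}
    (hc : G.IsHatCycle c) (hcu : G.hatSrc? c = some u) : ¬ G.InTRw u := by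
  obtain ⟨hcyc, hsrc, _⟩ := hat_to_E hc hcu
  exact hC4 _ hcyc u hsrc

lemma hatCycle_unweighted (hC4 : G.Cond4) {c : List G.HatE} {u : G.V}
    (hc : G.IsHatCycle c) (hcu : G.hatSrc? c = some u) :
    ∀ x ∈ c, G.w x.1.1 = 1 ∧ x.1.2 = 1 := by
  obtain ⟨hcyc, hsrc, hwk⟩ := hat_to_E hc hcu
  intro x hx
  have hmem : x.1.1 ∈ c.map heE := List.mem_map_of_mem (f := heE) hx
  have hw : G.w x.1.1 = 1 := by
    by_contra hw
    have h2 : 1 < G.w x.1.1 := lt_of_le_of_ne (G.w_pos _) (Ne.symm hw)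
    exact hatCycle_not_inTRw hC4 hc hcu ⟨x.1.1, h2, hwk.mem_reaches hmem⟩
  exact ⟨hw, le_antisymm (le_trans x.2.2 (le_of_eq hw)) x.2.1⟩

end WeightedGraph

namespace WeightedGraph

variable {G : WeightedGraph}

lemma core_cycle {cy : List G.HatE} (hc : G.IsHatCycle cy) {ρ : List G.HatE}
    (hinf : ρ <:+: cy ++ cy) (hne : ρ ≠ []) (hlen : ρ.length < cy.length)
    (hclose : G.hatR (ρ.getLast hne) = G.hatS (ρ.head hne)) : False := by
  obtain ⟨⟨hcne, hch⟩, hclosed, hnd⟩ := hc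
  have hnpos : 0 < cy.length := List.length_pos_iff.2 hcne
  have hmpos : 0 < ρ.length := List.length_pos_iff.2 hne
  have hclo : G.hatR (cy.getLast hcne) = G.hatS (cy.head hcne) := by
    rw [hatRng?, hatSrc?, List.getLast?_eq_getLast hcne] at hclosed
    cases cy with
    | nil => exact absurd rfl hcne
    | cons x t => simpa using hclosed
  have hchcc : (cy ++ cy).Chain' (fun a b => G.hatR a = G.hatS b) := by
    refine List.isChain_append.2 ⟨hch, hch, ?_⟩
    intro x hx y hy
    rw [List.getLast?_eq_getLast hcne] at hx
    cases cy with
    | nil => exact absurd rfl hcne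
    | cons z t =>
        simp only [Option.mem_def, Option.some.injEq, List.head?_cons] at hx hy
        rw [← hx, ← hy]; exact hclo
  -- option-level equations
  have sub0 : ∀ j, j < cy.length + cy.length → (cy ++ cy)[j]? = cy[j % cy.length]? := by
    intro j hj
    by_cases h : j < cy.length
    · rw [List.getElem?_append_left h, Nat.mod_eq_of_lt h]
    · rw [List.getElem?_append_right (by omega)]
      congr 1
      rw [Nat.mod_eq_sub_mod (by omega), Nat.mod_eq_of_lt (by omega)]
  have sub1 : ∀ j, j < cy.length + cy.length →
      ((cy ++ cy)[j]?).map G.hatS = (cy.map G.hatS)[j % cy.length]? := by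
    intro j hj
    rw [sub0 j hj, List.getElem?_map]
  have sub3 : ∀ j, j < cy.length + cy.length →
      ((cy ++ cy)[j]?).map G.hatR = (cy.map G.hatS)[(j + 1) % cy.length]? := by
    intro j hj
    by_cases h : j + 1 < cy.length + cy.length
    · have hch2 := List.isChain_iff_getElem.1 hchcc j (by simp only [List.length_append]; omega)
      have hj' : j < (cy ++ cy).length := by simp only [List.length_append]; omega
      have hj1 : j + 1 < (cy ++ cy).length := by simp only [List.length_append]; omega
      rw [List.getElem?_eq_getElem hj']
      simp only [Option.map_some]
      have : G.hatR ((cy ++ cy)[j]) = G.hatS ((cy ++ cy)[j + 1]) := by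
        simpa [List.get_eq_getElem] using hch2
      have hs := sub1 (j + 1) h
      rw [List.getElem?_eq_getElem hj1] at hs
      simp only [Option.map_some] at hs
      rw [this, hs]
    · have h2 : j + 1 = cy.length + cy.length := by omega
      have hjmod : (j + 1) % cy.length = 0 := by rw [h2]; simp [Nat.add_mod]
      have hjn : j % cy.length = cy.length - 1 := by
        rw [Nat.mod_eq_sub_mod (by omega), Nat.mod_eq_of_lt (by omega)]; omega
      rw [sub0 j hj, hjn, hjmod]
      rw [List.getElem?_eq_getElem (by omega), List.getElem?_eq_getElem (by simpa using hnpos)]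
      simp only [Option.map_some, Option.some.injEq]
      have hgl : cy[cy.length - 1] = cy.getLast hcne := by
        rw [List.getLast_eq_getElem]
      have hhd : (cy.map G.hatS)[0]'(by simpa using hnpos) = G.hatS (cy.head hcne) := by
        rw [List.getElem_map]
        congr 1
        rw [List.head_eq_getElem]
      rw [hgl, hhd, hclo]
  obtain ⟨pre, suf, heq⟩ := hinf
  have hbound : pre.length + ρ.length + suf.length = cy.length + cy.length := by
    have := congrArg List.length heq
    simp only [List.length_append] at this
    omega
  have hget : ∀ t, t < ρ.length → ρ[t]? = (cy ++ cy)[pre.length + t]? := by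
    intro t ht
    have heq' : pre ++ (ρ ++ suf) = cy ++ cy := by rw [← List.append_assoc]; exact heq
    rw [← heq', List.getElem?_append_right (Nat.le_add_right _ _), Nat.add_sub_cancel_left,
      List.getElem?_append_left ht]
  have hlastq : ρ[ρ.length - 1]? = some (ρ.getLast hne) := by
    rw [← List.getLast?_eq_getElem?, List.getLast?_eq_getLast hne]
  have hheadq : ρ[0]? = some (ρ.head hne) := by
    rw [← List.head?_eq_getElem?, List.head?_eq_head hne]
  have e1 : ((cy ++ cy)[pre.length + (ρ.length - 1)]?).map G.hatR
      = (cy.map G.hatS)[(pre.length + (ρ.length - 1) + 1) % cy.length]? :=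
    sub3 _ (by omega)
  have e2 : ((cy ++ cy)[pre.length]?).map G.hatS = (cy.map G.hatS)[pre.length % cy.length]? :=
    sub1 _ (by omega)
  rw [← hget _ (by omega)] at e1
  have e2' : (ρ[0]?).map G.hatS = (cy.map G.hatS)[pre.length % cy.length]? := by
    rw [hget 0 hmpos, Nat.add_zero]; exact e2
  rw [hlastq] at e1
  rw [hheadq] at e2'
  simp only [Option.map_some] at e1 e2'
  rw [hclose] at e1
  rw [e2'] at e1
  have hixeq : pre.length + (ρ.length - 1) + 1 = pre.length + ρ.length := by omega
  rw [hixeq] at e1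
  -- nodup gives index equality
  have hi1 : (pre.length + ρ.length) % cy.length < (cy.map G.hatS).length := by
    simpa using Nat.mod_lt _ hnpos
  have hi2 : pre.length % cy.length < (cy.map G.hatS).length := by
    simpa using Nat.mod_lt _ hnpos
  rw [List.getElem?_eq_getElem hi2, List.getElem?_eq_getElem hi1] at e1
  have e1' := Option.some.inj e1
  have hinj : pre.length % cy.length = (pre.length + ρ.length) % cy.length :=
    (List.Nodup.getElem_inj_iff hnd).1 e1'
  have hmod : Nat.ModEq cy.length pre.length (pre.length + ρ.length) := hinj
  have hdvd := (Nat.modEq_iff_dvd' (Nat.le_add_right _ _)).1 hmod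
  simp only [Nat.add_sub_cancel_left] at hdvd
  have := Nat.le_of_dvd hmpos hdvd
  omega

end WeightedGraph

namespace WeightedGraph

variable {G : WeightedGraph}

/-- edge of a letter -/
def edgeD : G.DL → G.E
  | Sum.inl a => a.1.1
  | Sum.inr a => a.1.1

/-- index of a letter -/
def idxD : G.DL → ℕ
  | Sum.inl a => a.1.2
  | Sum.inr a => a.1.2

lemma chain'_not_forbidden_allReal {sp : G.V → G.E} :
    ∀ {l : List G.DL}, (∀ x ∈ l, x.isLeft) →
      l.Chain' (fun x y => ¬ G.Forbidden sp x y) := by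
  intro l
  induction l with
  | nil => intro _; exact List.isChain_nil
  | cons x t ih =>
      intro h
      cases t with
      | nil => exact List.isChain_singleton _
      | cons y t' =>
          refine List.isChain_cons_cons.2 ⟨?_, ih (fun z hz => h z (List.mem_cons_of_mem x hz))⟩
          have hx := h x (List.mem_cons_self)
          have hy := h y (List.mem_cons_of_mem x (List.mem_cons_self))
          cases x with
          | inl a =>
              cases y with
              | inl b => exact fun hf => hf
              | inr b => simp at hy
          | inr a => simp at hx

lemma chain'_not_forbidden_allGhost {sp : G.V → G.E} :
    ∀ {l : List G.DL}, (∀ x ∈ l, x.isRight) →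
      l.Chain' (fun x y => ¬ G.Forbidden sp x y) := by
  intro l
  induction l with
  | nil => intro _; exact List.isChain_nil
  | cons x t ih =>
      intro h
      cases t with
      | nil => exact List.isChain_singleton _
      | cons y t' =>
          refine List.isChain_cons_cons.2 ⟨?_, ih (fun z hz => h z (List.mem_cons_of_mem x hz))⟩
          have hx := h x (List.mem_cons_self)
          have hy := h y (List.mem_cons_of_mem x (List.mem_cons_self))
          cases x with
          | inl a => simp at hx
          | inr a =>
              cases y with
              | inl b => simp at hy
              | inr b => exact fun hf => hf

lemma infix_of_map {α β : Type _} {f : α → β} {m : List β} {l : List α}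
    (h : m <:+: l.map f) : ∃ μ, μ <:+: l ∧ m = μ.map f := by
  obtain ⟨pre, suf, heq⟩ := h
  have heq' : pre ++ (m ++ suf) = l.map f := by rw [← List.append_assoc]; exact heq
  obtain ⟨pre', rest, hpre, h1, h2⟩ := List.append_eq_map_iff.1 heq'
  obtain ⟨μ, suf', hrest, h3, h4⟩ := List.map_eq_append_iff.1 h2
  exact ⟨μ, ⟨pre', suf', by rw [hpre, hrest, List.append_assoc]⟩, h3.symm⟩

end WeightedGraph

namespace WeightedGraph

variable {G : WeightedGraph}

/-- the ghost word of a hat-path, traversed backwards. -/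
def ghostW (G : WeightedGraph) (c : List G.HatE) : List G.DL := c.reverse.map Sum.inr

lemma dword_sq_closure {l : List G.DL} (hne : l ≠ []) (h : G.IsDWord (l ++ l)) :
    G.dR (l.getLast hne) = G.dS (l.head hne) := by
  have h2 := (List.isChain_append.1 h).2.2
  exact h2 (l.getLast hne) (by simp [List.getLast?_eq_getLast hne])
    (l.head hne) (by simp [List.head?_eq_head hne])

lemma embR_quasicycle {sp : G.V → G.E} {c : List G.HatE} (hc : G.IsHatCycle c) :
    G.IsQuasicycle sp (G.embR c) := by
  have hcne : c ≠ [] := hc.1.1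
  have hch := hc.1.2
  have hclo : G.hatR (c.getLast hcne) = G.hatS (c.head hcne) := by
    have hclosed := hc.2.1
    rw [hatRng?, hatSrc?, List.getLast?_eq_getLast hcne] at hclosed
    cases c with
    | nil => exact absurd rfl hcne
    | cons x t => simpa using hclosed
  have hne : G.embR c ≠ [] := by simp [embR, hcne]
  have hallL : ∀ x ∈ G.embR c ++ G.embR c, x.isLeft := by
    intro x hx
    rcases List.mem_append.1 hx with h | h <;>
      · obtain ⟨a, _, rfl⟩ := List.mem_map.1 h
        rfl
  have hchD : G.IsDWord (G.embR c) := (List.isChain_map _).mpr hch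
  have hjunc : ∀ x ∈ (G.embR c).getLast?, ∀ y ∈ (G.embR c).head?, G.dR x = G.dS y := by
    intro x hx y hy
    rw [embR, List.getLast?_map, List.getLast?_eq_getLast hcne] at hx
    rw [embR, List.head?_map, List.head?_eq_head hcne] at hy
    simp only [Option.map_some, Option.mem_def, Option.some.injEq] at hx hy
    rw [← hx, ← hy]
    exact hclo
  have hnod2 : G.IsNod2 sp (G.embR c) := by
    refine ⟨hne, List.isChain_append.2 ⟨hchD, hchD, hjunc⟩, ?_⟩
    exact chain'_not_forbidden_allReal hallL
  refine ⟨hnod2, ?_⟩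
  intro m hinf hlen hnod2m
  obtain ⟨hmne, hmsq, _⟩ := hnod2m
  have hmap : G.embR c ++ G.embR c = (c ++ c).map Sum.inl := by
    simp [embR]
  obtain ⟨μ, hμinf, hμeq⟩ := infix_of_map (hmap ▸ hinf)
  have hμne : μ ≠ [] := by
    intro h; rw [h] at hμeq; simp at hμeq; exact hmne hμeq
  subst hμeq
  have hclosem := dword_sq_closure hmne hmsq
  rw [List.getLast_map, List.head_map] at hclosem
  refine core_cycle hc hμinf hμne ?_ hclosem
  simpa [embR] using hlen

lemma ghostW_quasicycle {sp : G.V → G.E} {c : List G.HatE} (hc : G.IsHatCycle c) :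
    G.IsQuasicycle sp (G.ghostW c) := by
  have hcne : c ≠ [] := hc.1.1
  have hch := hc.1.2
  have hclo : G.hatR (c.getLast hcne) = G.hatS (c.head hcne) := by
    have hclosed := hc.2.1
    rw [hatRng?, hatSrc?, List.getLast?_eq_getLast hcne] at hclosed
    cases c with
    | nil => exact absurd rfl hcne
    | cons x t => simpa using hclosed
  have hrne : c.reverse ≠ [] := by simpa using hcne
  have hne : G.ghostW c ≠ [] := by simp [ghostW, hcne]
  have hallR : ∀ x ∈ G.ghostW c ++ G.ghostW c, x.isRight := by
    intro x hx
    rcases List.mem_append.1 hx with h | h <;>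
      · obtain ⟨a, _, rfl⟩ := List.mem_map.1 h
        rfl
  have hchD : G.IsDWord (G.ghostW c) := by
    refine (List.isChain_map _).mpr ?_
    refine List.isChain_reverse.mpr ?_
    exact hch.imp (fun _ _ h => h.symm)
  have hjunc : ∀ x ∈ (G.ghostW c).getLast?, ∀ y ∈ (G.ghostW c).head?, G.dR x = G.dS y := by
    intro x hx y hy
    rw [ghostW, List.getLast?_map, List.getLast?_eq_getLast hrne] at hx
    rw [ghostW, List.head?_map, List.head?_eq_head hrne] at hy
    simp only [Option.map_some, Option.mem_def, Option.some.injEq] at hx hy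
    rw [← hx, ← hy]
    show G.hatS (c.reverse.getLast hrne) = G.hatR (c.reverse.head hrne)
    rw [List.getLast_reverse, List.head_reverse]
    exact hclo.symm
  have hnod2 : G.IsNod2 sp (G.ghostW c) := by
    refine ⟨hne, List.isChain_append.2 ⟨hchD, hchD, hjunc⟩, ?_⟩
    exact chain'_not_forbidden_allGhost hallR
  refine ⟨hnod2, ?_⟩
  intro m hinf hlen hnod2m
  obtain ⟨hmne, hmsq, _⟩ := hnod2m
  have hmap : G.ghostW c ++ G.ghostW c = ((c ++ c).reverse).map Sum.inr := by
    simp [ghostW]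
  obtain ⟨ν, hνinf, hνeq⟩ := infix_of_map (hmap ▸ hinf)
  have hνne : ν ≠ [] := by
    intro h; rw [h] at hνeq; simp at hνeq; exact hmne hνeq
  have hρinf : ν.reverse <:+: c ++ c := by
    have := List.reverse_infix.mpr hνinf
    rwa [List.reverse_reverse] at this
  have hρne : ν.reverse ≠ [] := by simpa using hνne
  subst hνeq
  have hclosem := dword_sq_closure hmne hmsq
  rw [List.getLast_map, List.head_map] at hclosem
  refine core_cycle hc hρinf hρne ?_ ?_
  · simpa [ghostW] using hlen
  · show G.hatR (ν.reverse.getLast hρne) = G.hatS (ν.reverse.head hρne)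
    rw [List.getLast_reverse, List.head_reverse]
    exact hclosem.symm

end WeightedGraph

namespace WeightedGraph

variable {G : WeightedGraph}

lemma loop_quasicycle_real {sp : G.V → G.E} {x : G.HatE} (h : G.r x.1.1 = G.s x.1.1) :
    G.IsQuasicycle sp [Sum.inl x] := by
  refine ⟨⟨List.cons_ne_nil _ _, ?_, ?_⟩, ?_⟩
  · exact List.isChain_pair.2 h
  · exact List.isChain_pair.2 (fun hf => hf)
  · intro m _ hlen hm
    obtain ⟨hmne, _⟩ := hm
    rw [List.length_singleton] at hlen
    interval_cases h' : m.length
    exact hmne (List.length_eq_zero_iff.1 h')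

lemma loop_quasicycle_ghost {sp : G.V → G.E} {x : G.HatE} (h : G.r x.1.1 = G.s x.1.1) :
    G.IsQuasicycle sp [Sum.inr x] := by
  refine ⟨⟨List.cons_ne_nil _ _, ?_, ?_⟩, ?_⟩
  · exact List.isChain_pair.2 h.symm
  · exact List.isChain_pair.2 (fun hf => hf)
  · intro m _ hlen hm
    obtain ⟨hmne, _⟩ := hm
    rw [List.length_singleton] at hlen
    interval_cases h' : m.length
    exact hmne (List.length_eq_zero_iff.1 h')

lemma pair_quasicycle {sp : G.V → G.E} {x : G.HatE} (hnl : G.r x.1.1 ≠ G.s x.1.1)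
    (hi : 2 ≤ x.1.2) (hns : x.1.1 ≠ sp (G.s x.1.1)) :
    G.IsQuasicycle sp [Sum.inl x, Sum.inr x] := by
  have hnf1 : ¬ G.Forbidden sp (Sum.inl x) (Sum.inr x) := by
    rintro ⟨-, h2⟩; exact hns h2
  have hnf2 : ¬ G.Forbidden sp (Sum.inr x) (Sum.inl x) := by
    rintro ⟨h1, -⟩; omega
  refine ⟨⟨List.cons_ne_nil _ _, ?_, ?_⟩, ?_⟩
  · refine List.isChain_iff_getElem.2 ?_
    intro i hi'
    simp only [List.length_append, List.length_cons, List.length_nil] at hi'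
    have hi3 : i < 3 := by omega
    interval_cases i <;> rfl
  · refine List.isChain_iff_getElem.2 ?_
    intro i hi'
    simp only [List.length_append, List.length_cons, List.length_nil] at hi'
    have hi3 : i < 3 := by omega
    interval_cases i
    · exact hnf1
    · exact hnf2
    · exact hnf1
  · intro m hinf hlen hm
    obtain ⟨hmne, hmsq, _⟩ := hm
    have h1 : m.length = 1 := by
      have h0 := List.length_pos_iff.2 hmne
      have hlen' : m.length < 2 := by simpa using hlen
      omega
    obtain ⟨y, rfl⟩ := List.length_eq_one_iff.1 h1
    have hy : y ∈ ([Sum.inl x, Sum.inr x] ++ [Sum.inl x, Sum.inr x] : List G.DL) :=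
      hinf.sublist.subset (List.mem_singleton_self y)
    have hcl : G.dR y = G.dS y := by
      have := List.isChain_pair.1 hmsq
      exact this
    simp only [List.mem_append, List.mem_cons, List.not_mem_nil, or_false] at hy
    rcases hy with (rfl | rfl) | (rfl | rfl)
    · exact hnl hcl
    · exact hnl (hcl.symm)
    · exact hnl hcl
    · exact hnl (hcl.symm)

lemma special_of_avoid {sp : G.V → G.E} {p : List G.DL}
    (hav : ∀ x ∈ p, ¬ ∃ m, G.IsQuasicycle sp m ∧ x ∈ m) :
    ∀ x ∈ p, 2 ≤ idxD x → edgeD x = sp (G.s (edgeD x)) := by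
  intro x hx hi
  by_contra hns
  cases x with
  | inl a =>
      by_cases hloop : G.r a.1.1 = G.s a.1.1
      · exact hav _ hx ⟨[Sum.inl a], loop_quasicycle_real hloop, List.mem_singleton_self _⟩
      · exact hav _ hx ⟨[Sum.inl a, Sum.inr a], pair_quasicycle hloop hi hns,
          List.mem_cons_self⟩
  | inr a =>
      by_cases hloop : G.r a.1.1 = G.s a.1.1
      · exact hav _ hx ⟨[Sum.inr a], loop_quasicycle_ghost hloop, List.mem_singleton_self _⟩
      · exact hav _ hx ⟨[Sum.inl a, Sum.inr a], pair_quasicycle hloop hi hns,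
          List.mem_cons_of_mem _ (List.mem_singleton_self _)⟩

/-- no-loop version : every letter of an avoiding path has a non-loop edge. -/
lemma noloop_of_avoid {sp : G.V → G.E} {p : List G.DL}
    (hav : ∀ x ∈ p, ¬ ∃ m, G.IsQuasicycle sp m ∧ x ∈ m) :
    ∀ x ∈ p, G.r (edgeD x) ≠ G.s (edgeD x) := by
  intro x hx hloop
  cases x with
  | inl a => exact hav _ hx ⟨[Sum.inl a], loop_quasicycle_real hloop, List.mem_singleton_self _⟩
  | inr a => exact hav _ hx ⟨[Sum.inr a], loop_quasicycle_ghost hloop, List.mem_singleton_self _⟩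

end WeightedGraph

namespace WeightedGraph

variable {G : WeightedGraph}

lemma realBlock_wk : ∀ {R : List G.DL} (hne : R ≠ []), (∀ x ∈ R, x.isLeft) →
    G.IsDWord R →
    G.Wk (G.dS (R.head hne)) (R.map edgeD) (G.dR (R.getLast hne)) := by
  intro R
  induction R with
  | nil => intro hne; exact absurd rfl hne
  | cons x t ih =>
      intro hne hall hch
      cases x with
      | inr a => simpa using hall _ (List.mem_cons_self)
      | inl a =>
          cases t with
          | nil => exact ⟨rfl, rfl⟩
          | cons y t' =>
              obtain ⟨hxy, hch'⟩ := List.isChain_cons_cons.1 hch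
              have hall' : ∀ z ∈ y :: t', z.isLeft :=
                fun z hz => hall z (List.mem_cons_of_mem _ hz)
              have := ih (List.cons_ne_nil y t') hall' hch'
              refine ⟨rfl, ?_⟩
              rw [List.getLast_cons (List.cons_ne_nil y t')]
              have hr : G.r (edgeD (Sum.inl a)) = G.dS ((y :: t').head (List.cons_ne_nil y t')) := by
                exact hxy
              rwa [← hr] at this
  
lemma ghostBlock_wk : ∀ {L : List G.DL} (hne : L ≠ []), (∀ x ∈ L, x.isRight) →
    G.IsDWord L →
    G.Wk (G.dR (L.getLast hne)) ((L.map edgeD).reverse) (G.dS (L.head hne)) := by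
  intro L
  induction L with
  | nil => intro hne; exact absurd rfl hne
  | cons x t ih =>
      intro hne hall hch
      cases x with
      | inl a => simpa using hall _ (List.mem_cons_self)
      | inr a =>
          cases t with
          | nil => exact ⟨rfl, rfl⟩
          | cons y t' =>
              obtain ⟨hxy, hch'⟩ := List.isChain_cons_cons.1 hch
              have hall' : ∀ z ∈ y :: t', z.isRight :=
                fun z hz => hall z (List.mem_cons_of_mem _ hz)
              have hw := ih (List.cons_ne_nil y t') hall' hch'
              rw [List.getLast_cons (List.cons_ne_nil y t')]
              show G.Wk _ ((edgeD (Sum.inr a) :: (y :: t').map edgeD).reverse) _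
              rw [List.reverse_cons]
              refine wk_append.2 ⟨G.dS ((y :: t').head (List.cons_ne_nil y t')), hw, ?_⟩
              refine ⟨?_, rfl⟩
              exact hxy
  
end WeightedGraph

namespace WeightedGraph

variable {G : WeightedGraph}

lemma isLeft_ex {x : G.DL} (h : x.isLeft) : ∃ aL : G.HatE, x = Sum.inl aL := by
  cases x with
  | inl a => exact ⟨a, rfl⟩
  | inr a => simp at h

lemma isRight_ex {x : G.DL} (h : x.isRight) : ∃ aL : G.HatE, x = Sum.inr aL := by
  cases x with
  | inl a => simp at h
  | inr a => exact ⟨a, rfl⟩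

lemma wk_reaches_last_src {l : List G.E} {x y : G.V} (hne : l ≠ []) (h : G.Wk x l y) :
    G.Reaches x (G.s (l.getLast hne)) := by
  have hsplit : l.dropLast ++ [l.getLast hne] = l := List.dropLast_append_getLast hne
  obtain ⟨m, h1, h2⟩ := wk_append.1 (by rw [hsplit]; exact h)
  have : m = G.s (l.getLast hne) := h2.1.symm
  rw [← this]
  exact h1.reaches

lemma split_block (q : G.DL → Bool) (p : List G.DL) (hne : p ≠ []) (h : q (p.head hne)) :
    ∃ (R rest : List G.DL) (hRne : R ≠ []),
      p = R ++ rest ∧ (∀ x ∈ R, q x) ∧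
      (∀ (h2 : rest ≠ []), ¬ q (rest.head h2)) ∧
      R.head hRne = p.head hne ∧
      (∀ (h2 : rest ≠ []), rest.getLast h2 = p.getLast hne) := by
  have hpeq : p.takeWhile q ++ p.dropWhile q = p := List.takeWhile_append_dropWhile
  have hRne : p.takeWhile q ≠ [] := by
    cases p with
    | nil => exact absurd rfl hne
    | cons x t =>
        rw [List.takeWhile_cons]
        simp only [List.head_cons] at h
        rw [if_pos h]
        exact List.cons_ne_nil _ _
  refine ⟨p.takeWhile q, p.dropWhile q, hRne, hpeq.symm, ?_, ?_, ?_, ?_⟩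
  · exact fun x hx => List.mem_takeWhile_imp hx
  · intro h2
    have := List.head_dropWhile_not q h2
    simp [this]
  · have h1 : (p.takeWhile q).head? = p.head? := by
      cases p with
      | nil => rfl
      | cons x t =>
          rw [List.takeWhile_cons]
          simp only [List.head_cons] at h
          rw [if_pos h]
          rfl
    rw [List.head?_eq_head hRne, List.head?_eq_head hne] at h1
    exact Option.some.inj h1
  · intro h2
    have h3 : p.getLast? = (p.dropWhile q).getLast? := by
      conv_lhs => rw [← hpeq]
      rw [List.getLast?_append, List.getLast?_eq_getLast h2]
      rfl
    rw [List.getLast?_eq_getLast hne, List.getLast?_eq_getLast h2] at h3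
    exact (Option.some.inj h3).symm

lemma dR_left {aL : G.HatE} : G.dR (Sum.inl aL) = G.r aL.1.1 := rfl
lemma dS_left {aL : G.HatE} : G.dS (Sum.inl aL) = G.s aL.1.1 := rfl
lemma dR_right {aL : G.HatE} : G.dR (Sum.inr aL) = G.s aL.1.1 := rfl
lemma dS_right {aL : G.HatE} : G.dS (Sum.inr aL) = G.r aL.1.1 := rfl

end WeightedGraph


namespace WeightedGraph

variable {G : WeightedGraph}

lemma getLast_congr {α : Type _} {l l' : List α} (h : l = l') (h1 : l ≠ []) :
    l.getLast h1 = l'.getLast (h ▸ h1) := by subst h; rfl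

lemma head_append_left' {α : Type _} {l₁ l₂ : List α} (h1 : l₁ ≠ []) (h : l₁ ++ l₂ ≠ []) :
    (l₁ ++ l₂).head h = l₁.head h1 := by
  cases l₁ with
  | nil => exact absurd rfl h1
  | cons x t => rfl

lemma junction_of_append {l₁ l₂ : List G.DL} {Rrel : G.DL → G.DL → Prop}
    (h : (l₁ ++ l₂).Chain' Rrel) (h1 : l₁ ≠ []) (h2 : l₂ ≠ []) :
    Rrel (l₁.getLast h1) (l₂.head h2) := by
  have h3 := (List.isChain_append.1 h).2.2
  exact h3 _ (by rw [List.getLast?_eq_getLast h1]; rfl)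
    _ (by rw [List.head?_eq_head h2]; rfl)

set_option maxHeartbeats 1000000 in
lemma main_induction (hC2 : G.Cond2) (hC3 : G.Cond3) (hC4 : G.Cond4)
    {sp : G.V → G.E} (hsp : G.HasSpecial sp) :
    ∀ (n : ℕ) (p : List G.DL) (hne : p ≠ []), p.length ≤ n → G.IsNod sp p →
      (∀ x ∈ p, 2 ≤ idxD x → edgeD x = sp (G.s (edgeD x))) →
      ∀ (bL : G.HatE), p.head hne = Sum.inl bL →
      1 < G.w bL.1.1 → bL.1.1 = sp (G.s bL.1.1) →
      ∀ v, G.dRng? p = some v →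
      G.InTRw v ∨ (p.getLast hne).isRight := by
  intro n
  induction n with
  | zero =>
      intro p hne hlen
      exact absurd (List.length_eq_zero_iff.1 (Nat.le_zero.1 hlen)) hne
  | succ n ih =>
      intro p hne hlen hnod hstar bL hhead hbw hbsp v hv
      obtain ⟨hdw, hnf⟩ := hnod
      obtain ⟨R, rest, hRne, hpeq, hallR, hresthead, hRhead, hrestlast⟩ :=
        split_block Sum.isLeft p hne (by rw [hhead]; rfl)
      subst hpeq
      have hdwR : G.IsDWord R := hdw.prefix ⟨rest, rfl⟩
      have hRheadb : R.head hRne = Sum.inl bL := by rw [hRhead, hhead]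
      -- last letter of R
      obtain ⟨cL, hcL⟩ := isLeft_ex (hallR _ (List.getLast_mem hRne))
      -- full walk of R
      have hwRfull : G.Wk (G.s bL.1.1) (R.map edgeD) (G.r cL.1.1) := by
        have h0 := realBlock_wk hRne hallR hdwR
        rw [hRheadb, hcL] at h0
        exact h0
      have hmapne : R.map edgeD ≠ [] := by simpa using hRne
      have hmapLast : (R.map edgeD).getLast hmapne = cL.1.1 := by
        rw [List.getLast_map]
        rw [hcL]
        rfl
      have hRcons : R = Sum.inl bL :: R.tail := by
        conv_lhs => rw [← List.cons_head_tail hRne]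
        rw [hRheadb]
      have hmapR : R.map edgeD = bL.1.1 :: R.tail.map edgeD := by
        conv_lhs => rw [hRcons]
        rfl
      have hwR2 : G.Wk (G.s bL.1.1) (bL.1.1 :: R.tail.map edgeD) (G.r cL.1.1) := by
        rw [← hmapR]; exact hwRfull
      have hWt : G.Wk (G.r bL.1.1) (R.tail.map edgeD) (G.r cL.1.1) := hwR2.2
      have hreach_b_ce : G.Reaches (G.r bL.1.1) (G.r cL.1.1) := hWt.reaches
      -- ce is special
      have hce_sp : cL.1.1 = sp (G.s cL.1.1) := by
        by_cases hRT : R.tail.map edgeD = []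
        · have : (R.map edgeD).getLast hmapne = bL.1.1 := by
            rw [getLast_congr hmapR hmapne, getLast_congr (by rw [hRT] : bL.1.1 :: R.tail.map edgeD = [bL.1.1]) _]
            rfl
          rw [hmapLast] at this
          rw [this]
          exact hbsp
        · have hlastT : (R.tail.map edgeD).getLast hRT = cL.1.1 := by
            rw [← hmapLast, getLast_congr hmapR hmapne, List.getLast_cons hRT]
          have hreach : G.Reaches (G.r bL.1.1) (G.s cL.1.1) := by
            have := wk_reaches_last_src hRT hWt
            rwa [hlastT] at this
          have hIT : G.InTRw (G.s cL.1.1) := ⟨bL.1.1, hbw, hreach⟩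
          exact hC2 (G.s cL.1.1) hIT cL.1.1 (sp (G.s cL.1.1)) rfl
            (hsp (G.s cL.1.1) ⟨cL.1.1, rfl⟩).1
      by_cases hrne2 : rest = []
      · -- p = R : ends with a real letter, range in T(r b)
        subst hrne2
        left
        have h3 : (R ++ ([] : List G.DL)).getLast hne = R.getLast hRne :=
          getLast_congr (List.append_nil R) hne
        rw [dRng?, List.getLast?_eq_getLast hne, h3, hcL] at hv
        simp only [Option.map_some, Option.some.injEq] at hv
        rw [← hv]
        exact ⟨bL.1.1, hbw, hreach_b_ce⟩
      · -- there is a ghost block after R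
        have hrighthead : (rest.head hrne2).isRight := by
          have h4 := hresthead hrne2
          cases hh : rest.head hrne2 with
          | inl _ => rw [hh] at h4; simp at h4
          | inr _ => rfl
        obtain ⟨Gst, rest2, hGne, hreq, hallG, hr2head, hGhead, hr2last⟩ :=
          split_block Sum.isRight rest hrne2 hrighthead
        subst hreq
        have hGGne : Gst ++ rest2 ≠ [] := by simp [hGne]
        have hdwrest : G.IsDWord (Gst ++ rest2) := hdw.suffix ⟨R, rfl⟩
        have hnfrest : (Gst ++ rest2).Chain' (fun x y => ¬ G.Forbidden sp x y) :=
          hnf.suffix ⟨R, rfl⟩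
        have hdwG : G.IsDWord Gst := hdwrest.prefix ⟨rest2, rfl⟩
        -- letters of Gst
        obtain ⟨aL, haL⟩ := isRight_ex (hallG _ (List.getLast_mem hGne))
        obtain ⟨dL, hdL⟩ := isRight_ex (hallG _ (List.head_mem hGne))
        -- junction 1 : end of R meets start of Gst
        have hJ1dw : G.dR (R.getLast hRne) = G.dS ((Gst ++ rest2).head hGGne) :=
          junction_of_append hdw hRne hGGne
        have hJ1nf : ¬ G.Forbidden sp (R.getLast hRne) ((Gst ++ rest2).head hGGne) :=
          junction_of_append hnf hRne hGGne
        rw [head_append_left' hGne hGGne] at hJ1dw hJ1nf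
        rw [hcL, hdL] at hJ1dw hJ1nf
        have hrd_rce : G.r cL.1.1 = G.r dL.1.1 := hJ1dw
        have hcd : cL.1.1 ≠ dL.1.1 := by
          intro h5
          exact hJ1nf ⟨h5, hce_sp⟩
        -- ghost walk
        have hwG : G.Wk (G.s aL.1.1) ((Gst.map edgeD).reverse) (G.r dL.1.1) := by
          have h0 := ghostBlock_wk hGne hallG hdwG
          rw [haL, hdL] at h0
          exact h0
        have hσne : (Gst.map edgeD).reverse ≠ [] := by simpa using hGne
        have hσhead : ((Gst.map edgeD).reverse).head hσne = aL.1.1 := by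
          rw [List.head_reverse, List.getLast_map, haL]
          rfl
        have hσlast : ((Gst.map edgeD).reverse).getLast hσne = dL.1.1 := by
          rw [List.getLast_reverse, List.head_map, hdL]
          rfl
        have hσcons : (Gst.map edgeD).reverse
            = aL.1.1 :: ((Gst.map edgeD).reverse).tail := by
          conv_lhs => rw [← List.cons_head_tail hσne]
          rw [hσhead]
        have hwG2 : G.Wk (G.s aL.1.1) (aL.1.1 :: ((Gst.map edgeD).reverse).tail)
            (G.r dL.1.1) := by rw [← hσcons]; exact hwG
        have hWσt : G.Wk (G.r aL.1.1) (((Gst.map edgeD).reverse).tail) (G.r dL.1.1) :=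
          hwG2.2
        by_cases hr2ne : rest2 = []
        · -- p ends with the ghost block
          right
          subst hr2ne
          rw [← hrestlast hGGne]
          rw [getLast_congr (List.append_nil Gst) hGGne, haL]
          rfl
        · -- analysis of the junction between Gst and rest2
          have hleft2 : (rest2.head hr2ne).isLeft := by
            have h4 := hr2head hr2ne
            cases hh : rest2.head hr2ne with
            | inl _ => rfl
            | inr _ => rw [hh] at h4; simp at h4
          obtain ⟨b'L, hb'L⟩ := isLeft_ex hleft2
          have hJ2dw : G.dR (Gst.getLast hGne) = G.dS (rest2.head hr2ne) :=
            junction_of_append hdwrest hGne hr2ne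
          have hJ2nf : ¬ G.Forbidden sp (Gst.getLast hGne) (rest2.head hr2ne) :=
            junction_of_append hnfrest hGne hr2ne
          rw [haL, hb'L] at hJ2dw hJ2nf
          have hz : G.s aL.1.1 = G.s b'L.1.1 := hJ2dw
          have hidx : ¬ (aL.1.2 = 1 ∧ b'L.1.2 = 1) := by
            rintro ⟨h5, h6⟩
            exact hJ2nf ⟨h5, h6, hz⟩
          -- common IH application
          have hIHapp : 1 < G.w b'L.1.1 → b'L.1.1 = sp (G.s b'L.1.1) →
              (G.InTRw v ∨ ((R ++ (Gst ++ rest2)).getLast hne).isRight) := by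
            intro hw' hsp'
            have hr2suf : rest2 <:+ (R ++ (Gst ++ rest2)) :=
              ⟨R ++ Gst, by rw [List.append_assoc]⟩
            have hnod2 : G.IsNod sp rest2 := ⟨hdw.suffix hr2suf, hnf.suffix hr2suf⟩
            have hlen2 : rest2.length ≤ n := by
              have h7 : (R ++ (Gst ++ rest2)).length
                  = R.length + Gst.length + rest2.length := by
                simp [List.length_append]
                omega
              have h8 := List.length_pos_iff.2 hRne
              have h9 := List.length_pos_iff.2 hGne
              omega
            have hstar2 : ∀ x ∈ rest2, 2 ≤ idxD x → edgeD x = sp (G.s (edgeD x)) :=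
              fun x hx hi => hstar x (hr2suf.sublist.subset hx) hi
            have hv2 : G.dRng? rest2 = some v := by
              rw [dRng?, List.getLast?_eq_getLast hr2ne]
              rw [dRng?, List.getLast?_eq_getLast hne] at hv
              rw [← hrestlast hGGne, ← hr2last hr2ne] at hv
              exact hv
            rcases ih rest2 hr2ne hlen2 hnod2 hstar2 b'L hb'L hw' hsp' v hv2 with h | h
            · exact Or.inl h
            · right
              rw [← hrestlast hGGne, ← hr2last hr2ne]
              exact h
          by_cases hb'1 : b'L.1.2 = 1
          · -- the ghost letter has index ≥ 2, so its edge a is special and weighted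
            have hai : 2 ≤ aL.1.2 := by
              have h5 := aL.2.1
              have h6 : aL.1.2 ≠ 1 := fun h => hidx ⟨h, hb'1⟩
              omega
            have ha_sp : aL.1.1 = sp (G.s aL.1.1) := by
              have hmem : Sum.inr aL ∈ R ++ (Gst ++ rest2) := by
                rw [← haL]
                exact List.mem_append.2 (Or.inr (List.mem_append.2
                  (Or.inl (List.getLast_mem hGne))))
              exact hstar _ hmem hai
            have haw : 1 < G.w aL.1.1 := by
              have h5 := aL.2.2
              omega
            have hra : G.Reaches (G.r aL.1.1) (G.r cL.1.1) := by
              rw [hrd_rce]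
              exact hWσt.reaches
            have hinline : G.InLine aL.1.1 bL.1.1 := by
              by_contra hnl
              exact hC3 aL.1.1 bL.1.1 haw hbw hnl (G.r cL.1.1) hra hreach_b_ce
            have hWσt' : G.Wk (G.r aL.1.1) (((Gst.map edgeD).reverse).tail)
                (G.r cL.1.1) := by rw [hrd_rce]; exact hWσt
            rcases hinline with hab | hrs | hrs
            · -- a = b : the two walks coincide, so last edges coincide
              exfalso
              have hITrb : G.InTRw (G.r bL.1.1) :=
                ⟨bL.1.1, hbw, Relation.ReflTransGen.refl⟩
              have hWσt'' : G.Wk (G.r bL.1.1) (((Gst.map edgeD).reverse).tail)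
                  (G.r cL.1.1) := by rw [← hab]; exact hWσt'
              have heq2 : R.tail.map edgeD = ((Gst.map edgeD).reverse).tail :=
                wk_unique hC2 hC4 _ hITrb hWt hWσt''
              have hlists : R.map edgeD = (Gst.map edgeD).reverse := by
                rw [hmapR, hσcons, hab, heq2]
              have : cL.1.1 = dL.1.1 := by
                rw [← hmapLast, ← hσlast]
                exact getLast_congr hlists hmapne
              exact hcd this
            · -- r(a) reaches s(b)
              exfalso
              obtain ⟨π₀, hπ₀⟩ := reaches_iff_wk.1 hrs
              have hπ₁ : G.Wk (G.r aL.1.1) (π₀ ++ R.map edgeD) (G.r cL.1.1) :=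
                wk_append.2 ⟨_, hπ₀, hwRfull⟩
              have hITra : G.InTRw (G.r aL.1.1) :=
                ⟨aL.1.1, haw, Relation.ReflTransGen.refl⟩
              have heq2 : π₀ ++ R.map edgeD = ((Gst.map edgeD).reverse).tail :=
                wk_unique hC2 hC4 _ hITra hπ₁ hWσt'
              have hπ₁ne : π₀ ++ R.map edgeD ≠ [] := by simp [hmapne]
              have hσtne : ((Gst.map edgeD).reverse).tail ≠ [] := by
                rw [← heq2]; exact hπ₁ne
              have h5 : (π₀ ++ R.map edgeD).getLast hπ₁ne = cL.1.1 := by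
                rw [List.getLast_append_of_ne_nil _ hmapne]
                exact hmapLast
              have h6 : (((Gst.map edgeD).reverse).tail).getLast hσtne = dL.1.1 := by
                rw [← hσlast, getLast_congr hσcons hσne, List.getLast_cons hσtne]
              rw [getLast_congr heq2 hπ₁ne, h6] at h5
              exact hcd h5.symm
            · -- r(b) reaches s(a) : Cond2 forces rest2 to start with the
              -- special weighted edge a
              have hIT : G.InTRw (G.s aL.1.1) := ⟨bL.1.1, hbw, hrs⟩
              have hba : b'L.1.1 = aL.1.1 :=
                hC2 (G.s aL.1.1) hIT b'L.1.1 aL.1.1 hz.symm rfl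
              exact hIHapp (by rw [hba]; exact haw) (by rw [hba]; exact ha_sp)
          · -- the real letter b' has index ≥ 2
            have hbi : 2 ≤ b'L.1.2 := by
              have h5 := b'L.2.1
              omega
            have hsp' : b'L.1.1 = sp (G.s b'L.1.1) := by
              have hmem : Sum.inl b'L ∈ R ++ (Gst ++ rest2) := by
                rw [← hb'L]
                exact List.mem_append.2 (Or.inr (List.mem_append.2
                  (Or.inr (List.head_mem hr2ne))))
              exact hstar _ hmem hbi
            have hw' : 1 < G.w b'L.1.1 := by
              have h5 := b'L.2.2
              omega
            exact hIHapp hw' hsp'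

end WeightedGraph


namespace WeightedGraph

variable {G : WeightedGraph}

lemma wk_head_src {l : List G.E} {x y : G.V} (h : G.Wk x l y) (hnl : l ≠ []) :
    G.s (l.head hnl) = x := by
  cases l with
  | nil => exact absurd rfl hnl
  | cons e t => exact h.1

/-- data of an `E`-cycle at the `getElem` level. -/
lemma cycle_data {γ : List G.E} {u : G.V} (hcyc : G.IsCycle γ) (hsrc : G.pSrc? γ = some u) :
    ∃ hne : γ ≠ [],
      G.s (γ.head hne) = u ∧ G.r (γ.getLast hne) = u ∧
      (∀ k (hk : k + 1 < γ.length), G.r (γ[k]'(by omega)) = G.s (γ[k+1]'(by omega))) ∧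
      (∀ i j (hi : i < γ.length) (hj : j < γ.length),
        G.s (γ[i]'hi) = G.s (γ[j]'hj) → i = j) := by
  obtain ⟨⟨hne, hch⟩, hclosed, hnd⟩ := hcyc
  refine ⟨hne, ?_, ?_, ?_, ?_⟩
  · rw [pSrc?, List.head?_eq_head hne] at hsrc
    simpa using hsrc
  · rw [hsrc, pRng?, List.getLast?_eq_getLast hne] at hclosed
    simpa using hclosed
  · intro k hk
    have := List.isChain_iff_getElem.1 hch k (by omega)
    simpa [List.get_eq_getElem] using this
  · intro i j hi hj hij
    have h1 : (γ.map G.s)[i]'(by simpa using hi) = (γ.map G.s)[j]'(by simpa using hj) := by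
      simpa [List.getElem_map] using hij
    exact (List.Nodup.getElem_inj_iff hnd).1 h1

lemma cycle_unique_E (hex : G.NoCycleHasExit) {γ δ : List G.E} {u : G.V}
    (hγ : G.IsCycle γ) (hδ : G.IsCycle δ)
    (hγu : G.pSrc? γ = some u) (hδu : G.pSrc? δ = some u) : γ = δ := by
  obtain ⟨hγne, hγ0, hγcl, hγch, hγinj⟩ := cycle_data hγ hγu
  obtain ⟨hδne, hδ0, hδcl, hδch, hδinj⟩ := cycle_data hδ hδu
  have huniqγ : ∀ x ∈ γ, ∀ e, G.s e = G.s x → e = x := by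
    intro x hx e hse
    by_contra hnex
    exact hex γ hγ ⟨x, hx, e, hse, hnex⟩
  have hγ0' : G.s (γ[0]'(List.length_pos_iff.2 hγne)) = u := by
    rw [← List.head_eq_getElem]; exact hγ0
  have hδ0' : G.s (δ[0]'(List.length_pos_iff.2 hδne)) = u := by
    rw [← List.head_eq_getElem]; exact hδ0
  have hγcl' : G.r (γ[γ.length - 1]'(by have := List.length_pos_iff.2 hγne; omega)) = u := by
    rw [← List.getLast_eq_getElem]; exact hγcl
  have hδcl' : G.r (δ[δ.length - 1]'(by have := List.length_pos_iff.2 hδne; omega)) = u := by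
    rw [← List.getLast_eq_getElem]; exact hδcl
  have claimA : ∀ k (hk1 : k < δ.length) (hk2 : k < γ.length), δ[k]'hk1 = γ[k]'hk2 := by
    intro k
    induction k using Nat.strong_induction_on with
    | _ k ihk =>
        intro hk1 hk2
        match k with
        | 0 =>
            refine huniqγ _ (γ.getElem_mem _) _ ?_
            rw [hδ0', hγ0']
        | (k+1) =>
            refine huniqγ _ (γ.getElem_mem _) _ ?_
            have h1 : G.s (δ[k+1]'hk1) = G.r (δ[k]'(by omega)) := (hδch k hk1).symm
            have h2 : G.r (γ[k]'(by omega)) = G.s (γ[k+1]'hk2) := hγch k hk2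
            rw [h1, ihk k (by omega) (by omega) (by omega), h2]
  have hlen : δ.length = γ.length := by
    rcases Nat.lt_trichotomy δ.length γ.length with h | h | h
    · exfalso
      have hm := List.length_pos_iff.2 hδne
      have h1 : G.r (γ[δ.length - 1]'(by omega)) = u := by
        rw [← claimA (δ.length - 1) (by omega) (by omega)]
        exact hδcl'
      have h2 : G.s (γ[δ.length]'(by omega)) = u := by
        have h5 := hγch (δ.length - 1) (by omega)
        simp_rw [show δ.length - 1 + 1 = δ.length from by omega] at h5
        rw [← h5]
        exact h1
      have := hγinj δ.length 0 (by omega) (by omega) (by rw [h2, hγ0'])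
      omega
    · exact h
    · exfalso
      have hm := List.length_pos_iff.2 hγne
      have h1 : G.r (δ[γ.length - 1]'(by omega)) = u := by
        rw [claimA (γ.length - 1) (by omega) (by omega)]
        exact hγcl'
      have h2 : G.s (δ[γ.length]'(by omega)) = u := by
        have h5 := hδch (γ.length - 1) (by omega)
        simp_rw [show γ.length - 1 + 1 = γ.length from by omega] at h5
        rw [← h5]
        exact h1
      have := hδinj γ.length 0 (by omega) (by omega) (by rw [h2, hδ0'])
      omega
  refine List.ext_getElem hlen.symm ?_
  intro k hk1 hk2
  exact (claimA k hk2 hk1).symm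

lemma cycle_unique (hex : G.NoCycleHasExit) (hC4 : G.Cond4)
    {ch dh : List G.HatE} {u : G.V} (hc : G.IsHatCycle ch) (hd : G.IsHatCycle dh)
    (hcu : G.hatSrc? ch = some u) (hdu : G.hatSrc? dh = some u) : ch = dh := by
  obtain ⟨hγcyc, hγsrc, _⟩ := hat_to_E hc hcu
  obtain ⟨hδcyc, hδsrc, _⟩ := hat_to_E hd hdu
  have hmap : ch.map heE = dh.map heE := cycle_unique_E hex hγcyc hδcyc hγsrc hδsrc
  have hlen : ch.length = dh.length := by
    have := congrArg List.length hmap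
    simpa using this
  refine List.ext_getElem hlen ?_
  intro k hk1 hk2
  have h1 : (ch[k]'hk1).1.1 = (dh[k]'hk2).1.1 := by
    have := congrArg (fun l => l[k]?) hmap
    simp only [List.getElem?_map] at this
    rw [List.getElem?_eq_getElem hk1, List.getElem?_eq_getElem hk2] at this
    simpa [heE] using this
  have h2 := hatCycle_unweighted hC4 hc hcu _ (ch.getElem_mem hk1)
  have h3 := hatCycle_unweighted hC4 hd hdu _ (dh.getElem_mem hk2)
  apply Subtype.ext
  apply Prod.ext h1
  rw [h2.2, h3.2]

end WeightedGraph


namespace WeightedGraph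

variable {G : WeightedGraph}

lemma unique_out (hex : G.NoCycleHasExit) {ch : List G.HatE} {u : G.V}
    (hc : G.IsHatCycle ch) (hcu : G.hatSrc? ch = some u) :
    ∀ e : G.E, G.s e = u → e = (ch.head hc.1.1).1.1 := by
  obtain ⟨hγcyc, hγsrc, _⟩ := hat_to_E hc hcu
  have hγne : ch.map heE ≠ [] := hγcyc.1.1
  have hhead : (ch.map heE).head hγne = (ch.head hc.1.1).1.1 := by
    rw [List.head_map]
    rfl
  have hs0 : G.s ((ch.map heE).head hγne) = u := by
    rw [pSrc?, List.head?_eq_head hγne] at hγsrc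
    simpa using hγsrc
  intro e he
  by_contra hnex
  refine hex _ hγcyc ⟨(ch.map heE).head hγne, List.head_mem hγne, e, ?_, ?_⟩
  · rw [he, ← hs0]
  · rw [hhead]
    exact hnex

end WeightedGraph

/-- **Lemma (Statement 10).** Suppose `(E,w)` is finite, no cycle has an exit
and the weighted part of `(E,w)` is well-behaved.  Let `c`, `d` be cycles in
`Ê` based at `u` resp. `v`.  Then (i) if `u = v` then `c = d`, and (ii) there
is no nontrivial nod-path from `u` to `v` all of whose letters avoid every
quasicycle. -/
theorem cycles_lemma (G : WeightedGraph) (hfin : G.IsFinite)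
    (hex : G.NoCycleHasExit) (hwb : G.WellBehaved)
    (sp : G.V → G.E) (hsp : G.HasSpecial sp)
    (c d : List G.HatE) (u v : G.V)
    (hc : G.IsHatCycle c) (hd : G.IsHatCycle d)
    (hcu : G.hatSrc? c = some u) (hdv : G.hatSrc? d = some v) :
    (u = v → c = d) ∧
    ¬ ∃ p : List G.DL, p ≠ [] ∧ G.IsNod sp p ∧
        (∀ x ∈ p, ¬ ∃ m : List G.DL, G.IsQuasicycle sp m ∧ x ∈ m) ∧
        G.dSrc? p = some u ∧ G.dRng? p = some v := by
  open WeightedGraph in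
  obtain ⟨⟨hC1, hC2, hC3, hC4⟩, hC5⟩ := hwb
  constructor
  · intro huv
    subst huv
    exact WeightedGraph.cycle_unique hex hC4 hc hd hcu hdv
  · rintro ⟨p, hpne, hnodp, havoid, hsrcp, hrngp⟩
    have hnotu : ¬ G.InTRw u := WeightedGraph.hatCycle_not_inTRw hC4 hc hcu
    have hnotv : ¬ G.InTRw v := WeightedGraph.hatCycle_not_inTRw hC4 hd hdv
    have hstar := WeightedGraph.special_of_avoid havoid
    have hheadS : G.dS (p.head hpne) = u := by
      rw [dSrc?, List.head?_eq_head hpne] at hsrcp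
      simpa using hsrcp
    have hlastR : G.dR (p.getLast hpne) = v := by
      rw [dRng?, List.getLast?_eq_getLast hpne] at hrngp
      simpa using hrngp
    -- the first letter of p must be a ghost letter
    have hfirstGhost : (p.head hpne).isRight := by
      cases hh : p.head hpne with
      | inr _ => rfl
      | inl eL =>
          exfalso
          have hse : G.s eL.1.1 = u := by rw [hh] at hheadS; exact hheadS
          have he1 : eL.1.1 = (c.head hc.1.1).1.1 := WeightedGraph.unique_out hex hc hcu _ hse
          have hw1 := WeightedGraph.hatCycle_unweighted hC4 hc hcu _ (List.head_mem hc.1.1)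
          have hidx : eL.1.2 = 1 := by
            have h1 := eL.2.1
            have h2 := eL.2.2
            rw [he1, hw1.1] at h2
            omega
          have heq : eL = c.head hc.1.1 :=
            Subtype.ext (Prod.ext he1 (by rw [hidx, hw1.2]))
          refine havoid _ (List.head_mem hpne)
            ⟨G.embR c, WeightedGraph.embR_quasicycle hc, ?_⟩
          rw [hh, heq]
          exact List.mem_map_of_mem (List.head_mem hc.1.1)
    -- the last letter of p must be a real letter
    have hlastLeft : (p.getLast hpne).isLeft := by
      cases hh : p.getLast hpne with
      | inl _ => rfl
      | inr gL =>
          exfalso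
          have hse : G.s gL.1.1 = v := by rw [hh] at hlastR; exact hlastR
          have he1 : gL.1.1 = (d.head hd.1.1).1.1 := WeightedGraph.unique_out hex hd hdv _ hse
          have hw1 := WeightedGraph.hatCycle_unweighted hC4 hd hdv _ (List.head_mem hd.1.1)
          have hidx : gL.1.2 = 1 := by
            have h1 := gL.2.1
            have h2 := gL.2.2
            rw [he1, hw1.1] at h2
            omega
          have heq : gL = d.head hd.1.1 :=
            Subtype.ext (Prod.ext he1 (by rw [hidx, hw1.2]))
          refine havoid _ (List.getLast_mem hpne)
            ⟨G.ghostW d, WeightedGraph.ghostW_quasicycle hd, ?_⟩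
          rw [hh, heq]
          exact List.mem_map_of_mem (List.mem_reverse.2 (List.head_mem hd.1.1))
    -- split off the first (ghost) block
    obtain ⟨G1, rest, hG1ne, hpeq, hallG1, hresthead, hG1head, hrestlast⟩ :=
      WeightedGraph.split_block Sum.isRight p hpne hfirstGhost
    subst hpeq
    have hrne : rest ≠ [] := by
      intro h0
      subst h0
      obtain ⟨aL, haL⟩ := WeightedGraph.isRight_ex (hallG1 _ (List.getLast_mem hG1ne))
      have h1 : (G1 ++ ([] : List G.DL)).getLast hpne = Sum.inr aL := by
        rw [WeightedGraph.getLast_congr (List.append_nil G1) hpne]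
        exact haL
      rw [h1] at hlastLeft
      simp at hlastLeft
    obtain ⟨hdwp, hnfp⟩ := hnodp
    have hdwG1 : G.IsDWord G1 := hdwp.prefix ⟨rest, rfl⟩
    obtain ⟨aL, haL⟩ := WeightedGraph.isRight_ex (hallG1 _ (List.getLast_mem hG1ne))
    have hG1headu : G.dS (G1.head hG1ne) = u := by rw [hG1head]; exact hheadS
    have hwG1 : G.Wk (G.s aL.1.1) ((G1.map edgeD).reverse) u := by
      have h0 := WeightedGraph.ghostBlock_wk hG1ne hallG1 hdwG1
      rw [haL, hG1headu] at h0
      exact h0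
    have hσne : (G1.map edgeD).reverse ≠ [] := by simpa using hG1ne
    have hσhead : ((G1.map edgeD).reverse).head hσne = aL.1.1 := by
      rw [List.head_reverse, List.getLast_map, haL]
      rfl
    have hσcons : (G1.map edgeD).reverse = aL.1.1 :: ((G1.map edgeD).reverse).tail := by
      conv_lhs => rw [← List.cons_head_tail hσne]
      rw [hσhead]
    have hwG1' : G.Wk (G.s aL.1.1) (aL.1.1 :: ((G1.map edgeD).reverse).tail) u := by
      rw [← hσcons]; exact hwG1
    have hreach_a_u : G.Reaches (G.r aL.1.1) u := hwG1'.2.reaches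
    have haw1 : G.w aL.1.1 = 1 := by
      by_contra hxx
      have h2 : 1 < G.w aL.1.1 := lt_of_le_of_ne (G.w_pos _) (Ne.symm hxx)
      exact hnotu ⟨aL.1.1, h2, hreach_a_u⟩
    have hai1 : aL.1.2 = 1 := by
      have h1 := aL.2.1
      have h2 := aL.2.2
      omega
    -- junction between the ghost block and the rest
    have hJdw : G.dR (G1.getLast hG1ne) = G.dS (rest.head hrne) :=
      WeightedGraph.junction_of_append hdwp hG1ne hrne
    have hJnf : ¬ G.Forbidden sp (G1.getLast hG1ne) (rest.head hrne) :=
      WeightedGraph.junction_of_append hnfp hG1ne hrne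
    have hleft : (rest.head hrne).isLeft := by
      have h4 := hresthead hrne
      cases hh : rest.head hrne with
      | inl _ => rfl
      | inr _ => rw [hh] at h4; simp at h4
    obtain ⟨bL, hbL⟩ := WeightedGraph.isLeft_ex hleft
    rw [haL, hbL] at hJdw hJnf
    have hbi : 2 ≤ bL.1.2 := by
      have h1 := bL.2.1
      have h2 : bL.1.2 ≠ 1 := fun hb1 => hJnf ⟨hai1, hb1, hJdw⟩
      omega
    have hbsp : bL.1.1 = sp (G.s bL.1.1) := by
      have hmem : Sum.inl bL ∈ G1 ++ rest := by
        rw [← hbL]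
        exact List.mem_append.2 (Or.inr (List.head_mem hrne))
      exact hstar _ hmem hbi
    have hbw : 1 < G.w bL.1.1 := by
      have h2 := bL.2.2
      omega
    have hrest_nod : G.IsNod sp rest := ⟨hdwp.suffix ⟨G1, rfl⟩, hnfp.suffix ⟨G1, rfl⟩⟩
    have hstar2 : ∀ x ∈ rest, 2 ≤ idxD x → edgeD x = sp (G.s (edgeD x)) :=
      fun x hx hi => hstar x (List.mem_append.2 (Or.inr hx)) hi
    have hv2 : G.dRng? rest = some v := by
      rw [dRng?, List.getLast?_eq_getLast hrne, hrestlast hrne]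
      simp only [Option.map_some]
      rw [hlastR]
    rcases WeightedGraph.main_induction hC2 hC3 hC4 hsp rest.length rest hrne le_rfl
      hrest_nod hstar2 bL hbL hbw hbsp v hv2 with h | h
    · exact hnotv h
    · rw [hrestlast hrne] at h
      obtain ⟨xL, hxL⟩ := WeightedGraph.isRight_ex h
      rw [hxL] at hlastLeft
      simp at hlastLeft
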